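/- arXiv:2603.07373 — 10 statements merged into one kernel-verified Lean document; each statement's English description precedes it below -/
import Mathlib

section
/- Let D be an n×n real matrix with nonnegative entries whose degree is k ≥ 1. Then there exist exactly k permutations σ₁,…,σ_k of {1,…,n} and positive real weights α₁,…,α_k such that the family (σ₁,α₁),…,(σ_k,α_k) covers D, i.e. ∑_{l=1}^k α_l P_{σ_l} ≥ D entrywise. -/
open Finset

/-- The degree of a matrix: the maximum, over all rows and columns, of the
number of nonzero entries in that row or column. -/
noncomputable def degree {n : ℕ} (D : Matrix (Fin n) (Fin n) ℝ) : ℕ :=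
  max (univ.sup fun i => (univ.filter fun j => D i j ≠ 0).card)
      (univ.sup fun j => (univ.filter fun i => D i j ≠ 0).card)

/-- A square ℕ-matrix with all row and column sums equal to a positive `k`
admits a permutation hitting a positive entry in each row (via Hall). -/
lemma hall_perm_aux {n k : ℕ} (hk : 0 < k) (B : Fin n → Fin n → ℕ)
    (hrow : ∀ i, ∑ j, B i j = k) (hcol : ∀ j, ∑ i, B i j = k) :
    ∃ σ : Equiv.Perm (Fin n), ∀ i, 1 ≤ B i (σ i) := by
  classical
  set t : Fin n → Finset (Fin n) := fun i => univ.filter (fun j => 1 ≤ B i j) with ht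
  have hall : ∀ s : Finset (Fin n), s.card ≤ (s.biUnion t).card := by
    intro s
    have h1 : k * s.card ≤ k * (s.biUnion t).card := by
      have e1 : k * s.card = ∑ i ∈ s, ∑ j, B i j := by
        simp [hrow, mul_comm]
      have e2 : ∀ i ∈ s, ∑ j, B i j = ∑ j ∈ t i, B i j := by
        intro i _
        rw [ht]
        rw [Finset.sum_filter_of_ne]
        intro j _ hj
        omega
      have e3 : ∀ i ∈ s, ∑ j ∈ t i, B i j ≤ ∑ j ∈ s.biUnion t, B i j := by
        intro i hi
        exact Finset.sum_le_sum_of_subset (Finset.subset_biUnion_of_mem t hi)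
      calc k * s.card = ∑ i ∈ s, ∑ j, B i j := e1
        _ = ∑ i ∈ s, ∑ j ∈ t i, B i j := Finset.sum_congr rfl e2
        _ ≤ ∑ i ∈ s, ∑ j ∈ s.biUnion t, B i j := Finset.sum_le_sum e3
        _ = ∑ j ∈ s.biUnion t, ∑ i ∈ s, B i j := Finset.sum_comm
        _ ≤ ∑ j ∈ s.biUnion t, ∑ i, B i j :=
            Finset.sum_le_sum (fun j _ => Finset.sum_le_sum_of_subset (Finset.subset_univ s))
        _ = ∑ j ∈ s.biUnion t, k := by simp [hcol]
        _ = k * (s.biUnion t).card := by simp [mul_comm]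
    exact Nat.le_of_mul_le_mul_left h1 hk
  obtain ⟨f, hinj, hf⟩ := (Finset.all_card_le_biUnion_card_iff_existsInjective' t).mp hall
  refine ⟨Equiv.ofBijective f (Finite.injective_iff_bijective.mp hinj), fun i => ?_⟩
  have := hf i
  rw [ht] at this
  simpa using (Finset.mem_filter.mp this).2

/-- A square ℕ-matrix with all row and column sums equal to `k` is covered by
`k` permutations. -/
lemma decomp_aux {n : ℕ} : ∀ (k : ℕ) (B : Fin n → Fin n → ℕ),
    (∀ i, ∑ j, B i j = k) → (∀ j, ∑ i, B i j = k) →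
    ∃ σ : Fin k → Equiv.Perm (Fin n), ∀ i j, 1 ≤ B i j → ∃ l, σ l i = j := by
  intro k
  induction k with
  | zero =>
    intro B hrow _
    refine ⟨fun l => l.elim0, fun i j h => ?_⟩
    have : B i j = 0 := by
      have := hrow i
      have hm : B i j ≤ ∑ j', B i j' := Finset.single_le_sum (fun _ _ => Nat.zero_le _) (mem_univ j)
      omega
    omega
  | succ k IH =>
    intro B hrow hcol
    obtain ⟨σ0, hσ0⟩ := hall_perm_aux (Nat.succ_pos k) B hrow hcol
    set B' : Fin n → Fin n → ℕ := fun i j => B i j - (if σ0 i = j then 1 else 0) with hB'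
    have hle : ∀ i j, (if σ0 i = j then 1 else 0) ≤ B i j := by
      intro i j
      by_cases h : σ0 i = j
      · simpa [h] using hσ0 i
      · simp [h]
    have hrow' : ∀ i, ∑ j, B' i j = k := by
      intro i
      rw [hB']
      rw [Finset.sum_tsub_distrib _ (fun j _ => hle i j)]
      simp [hrow i]
    have hcol' : ∀ j, ∑ i, B' i j = k := by
      intro j
      rw [hB']
      rw [Finset.sum_tsub_distrib _ (fun i _ => hle i j)]
      have : ∑ i, (if σ0 i = j then 1 else 0) = 1 := by
        rw [Finset.sum_congr rfl (fun i _ => by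
          rw [show (if σ0 i = j then 1 else 0) = if i = σ0.symm j then 1 else 0 by
            simp [Equiv.apply_eq_iff_eq_symm_apply]])]
        simp
      rw [this, hcol j]
      omega
    obtain ⟨σ', hσ'⟩ := IH B' hrow' hcol'
    refine ⟨Fin.cons σ0 σ', fun i j h => ?_⟩
    by_cases hc : σ0 i = j
    · exact ⟨0, by simpa using hc⟩
    · have : 1 ≤ B' i j := by
        rw [hB']; simp only [hc, if_false]; omega
      obtain ⟨l, hl⟩ := hσ' i j this
      exact ⟨l.succ, by simpa using hl⟩

/-- Any ℕ-matrix with row and column sums at most `k` can be increased to one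
with all row and column sums exactly `k`. -/
lemma fill_aux {n : ℕ} (k : ℕ) : ∀ (d : ℕ) (A : Fin n → Fin n → ℕ),
    (∀ i, ∑ j, A i j ≤ k) → (∀ j, ∑ i, A i j ≤ k) →
    n * k - (∑ i, ∑ j, A i j) = d →
    ∃ B : Fin n → Fin n → ℕ, (∀ i j, A i j ≤ B i j) ∧
      (∀ i, ∑ j, B i j = k) ∧ (∀ j, ∑ i, B i j = k) := by
  intro d
  induction d with
  | zero =>
    intro A hrow hcol hd
    have htot : ∑ i, ∑ j, A i j ≤ n * k := by
      calc ∑ i : Fin n, ∑ j, A i j ≤ ∑ _i : Fin n, k := Finset.sum_le_sum (fun i _ => hrow i)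
        _ = n * k := by simp
    have heq : ∑ i, ∑ j, A i j = n * k := by omega
    have hroweq : ∀ i, ∑ j, A i j = k := by
      by_contra hc
      push_neg at hc
      obtain ⟨i0, hi0⟩ := hc
      have : ∑ i, ∑ j, A i j < ∑ _i : Fin n, k :=
        Finset.sum_lt_sum (fun i _ => hrow i) ⟨i0, mem_univ i0, lt_of_le_of_ne (hrow i0) hi0⟩
      simp at this
      omega
    have hcoleq : ∀ j, ∑ i, A i j = k := by
      by_contra hc
      push_neg at hc
      obtain ⟨j0, hj0⟩ := hc
      have hswap : ∑ j, ∑ i, A i j = n * k := by rw [Finset.sum_comm]; exact heq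
      have : ∑ j : Fin n, ∑ i, A i j < ∑ _j : Fin n, k :=
        Finset.sum_lt_sum (fun j _ => hcol j) ⟨j0, mem_univ j0, lt_of_le_of_ne (hcol j0) hj0⟩
      simp at this
      omega
    exact ⟨A, fun _ _ => le_refl _, hroweq, hcoleq⟩
  | succ d IH =>
    intro A hrow hcol hd
    have htot : ∑ i, ∑ j, A i j < n * k := by
      have : ∑ i : Fin n, ∑ j, A i j ≤ ∑ _i : Fin n, k := Finset.sum_le_sum (fun i _ => hrow i)
      simp at this
      omega
    have hex_i : ∃ i0, ∑ j, A i0 j < k := by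
      by_contra hc
      push_neg at hc
      have : ∑ _i : Fin n, k ≤ ∑ i, ∑ j, A i j := Finset.sum_le_sum (fun i _ => hc i)
      simp at this
      omega
    have hex_j : ∃ j0, ∑ i, A i j0 < k := by
      by_contra hc
      push_neg at hc
      have : ∑ _j : Fin n, k ≤ ∑ j, ∑ i, A i j := Finset.sum_le_sum (fun j _ => hc j)
      rw [Finset.sum_comm (γ := Fin n)] at this
      simp at this
      omega
    obtain ⟨i0, hi0⟩ := hex_i
    obtain ⟨j0, hj0⟩ := hex_j
    classical
    set A' : Fin n → Fin n → ℕ := fun i j => A i j + (if i = i0 ∧ j = j0 then 1 else 0) with hA'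
    have hrowA' : ∀ i, ∑ j, A' i j = ∑ j, A i j + (if i = i0 then 1 else 0) := by
      intro i
      rw [hA']
      simp only [Finset.sum_add_distrib]
      congr 1
      by_cases h : i = i0 <;> simp [h]
    have hcolA' : ∀ j, ∑ i, A' i j = ∑ i, A i j + (if j = j0 then 1 else 0) := by
      intro j
      rw [hA']
      simp only [Finset.sum_add_distrib]
      congr 1
      by_cases h : j = j0 <;> simp [h]
    have hrow' : ∀ i, ∑ j, A' i j ≤ k := by
      intro i
      rw [hrowA' i]
      by_cases h : i = i0
      · subst h; simpa using hi0
      · simp [h, hrow i]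
    have hcol' : ∀ j, ∑ i, A' i j ≤ k := by
      intro j
      rw [hcolA' j]
      by_cases h : j = j0
      · subst h; simpa using hj0
      · simp [h, hcol j]
    have htot' : ∑ i, ∑ j, A' i j = (∑ i, ∑ j, A i j) + 1 := by
      rw [Finset.sum_congr rfl (fun i _ => hrowA' i)]
      rw [Finset.sum_add_distrib]
      simp
    obtain ⟨B, hB1, hB2, hB3⟩ := IH A' hrow' hcol' (by omega)
    refine ⟨B, fun i j => ?_, hB2, hB3⟩
    calc A i j ≤ A' i j := by rw [hA']; exact Nat.le_add_right _ _
      _ ≤ B i j := hB1 i j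

/-- If `D` is an `n × n` nonnegative real matrix of degree `k ≥ 1`, then there
exist exactly `k` permutations `σ 0, …, σ (k-1)` of `Fin n` and positive
weights `α 0, …, α (k-1)` whose weighted sum of permutation matrices covers
`D` entrywise. -/
theorem exists_cover_with_degree_many_permutations {n : ℕ}
    (D : Matrix (Fin n) (Fin n) ℝ) (hD : ∀ i j, 0 ≤ D i j)
    (k : ℕ) (hk : 1 ≤ k) (hdeg : degree D = k) :
    ∃ (σ : Fin k → Equiv.Perm (Fin n)) (α : Fin k → ℝ),
      (∀ l, 0 < α l) ∧
      ∀ i j, D i j ≤ ∑ l, α l * (if σ l i = j then (1 : ℝ) else 0) := by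
  classical
  set A : Fin n → Fin n → ℕ := fun i j => if D i j ≠ 0 then 1 else 0 with hA
  have hrowA : ∀ i, ∑ j, A i j ≤ k := by
    intro i
    have : ∑ j, A i j = (univ.filter fun j => D i j ≠ 0).card := by
      rw [hA, Finset.card_filter]
    rw [this, ← hdeg]
    unfold degree
    exact le_trans (Finset.le_sup (f := fun i => (univ.filter fun j => D i j ≠ 0).card) (mem_univ i)) (le_max_left _ _)
  have hcolA : ∀ j, ∑ i, A i j ≤ k := by
    intro j
    have : ∑ i, A i j = (univ.filter fun i => D i j ≠ 0).card := by
      rw [hA, Finset.card_filter]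
    rw [this, ← hdeg]
    unfold degree
    exact le_trans (Finset.le_sup (f := fun j => (univ.filter fun i => D i j ≠ 0).card) (mem_univ j)) (le_max_right _ _)
  obtain ⟨B, hAB, hrowB, hcolB⟩ := fill_aux k _ A hrowA hcolA rfl
  obtain ⟨σ, hσ⟩ := decomp_aux k B hrowB hcolB
  set M : ℝ := 1 + ∑ i, ∑ j, D i j with hM
  have hMpos : 0 < M := by
    rw [hM]
    have : (0:ℝ) ≤ ∑ i, ∑ j, D i j :=
      Finset.sum_nonneg (fun i _ => Finset.sum_nonneg (fun j _ => hD i j))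
    linarith
  refine ⟨σ, fun _ => M, fun _ => hMpos, fun i j => ?_⟩
  have hterm : ∀ l : Fin k, (0:ℝ) ≤ M * (if σ l i = j then (1 : ℝ) else 0) := by
    intro l
    by_cases h : σ l i = j <;> simp [h, le_of_lt hMpos]
  by_cases h : D i j = 0
  · rw [h]
    exact Finset.sum_nonneg (fun l _ => hterm l)
  · have hB1 : 1 ≤ B i j := le_trans (by rw [hA]; simp [h]) (hAB i j)
    obtain ⟨l0, hl0⟩ := hσ i j hB1
    have hDM : D i j ≤ M := by
      rw [hM]
      have h1 : D i j ≤ ∑ j', D i j' := Finset.single_le_sum (fun j' _ => hD i j') (mem_univ j)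
      have h2 : ∑ j', D i j' ≤ ∑ i', ∑ j', D i' j' :=
        Finset.single_le_sum (fun i' (_ : i' ∈ univ) =>
          Finset.sum_nonneg (fun j' _ => hD i' j')) (mem_univ i)
      linarith
    calc D i j ≤ M := hDM
      _ = M * (if σ l0 i = j then (1 : ℝ) else 0) := by simp [hl0]
      _ ≤ ∑ l, M * (if σ l i = j then (1 : ℝ) else 0) :=
          Finset.single_le_sum (fun l _ => hterm l) (mem_univ l0)
end

section
/- Let S be an n×n matrix with entries in {0,1} whose degree is k ≥ 1. Then there exists a permutation σ of {1,…,n} such that the matrix S′ defined by S′_{ij} = 0 if j = σ(i) and S′_{ij} = S_{ij} otherwise has degree at most k − 1. Equivalently, σ can be chosen so that S_{i,σ(i)} = 1 for every row i containing exactly k ones and S_{σ⁻¹(j),j} = 1 for every column j containing exactly k ones. -/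
open Finset

/-- Double counting: summing sizes of filtered rows equals summing sizes of
filtered columns. -/
lemma sum_card_filter_comm {n : ℕ} (P : Fin n → Fin n → Prop) [∀ i j, Decidable (P i j)]
    (A B : Finset (Fin n)) :
    ∑ i ∈ A, (B.filter fun j => P i j).card = ∑ j ∈ B, (A.filter fun i => P i j).card := by
  simp_rw [Finset.card_filter]
  exact Finset.sum_comm

/-- If `S` is an `n × n` matrix with entries in `{0, 1}` of degree `k ≥ 1`,
then there is a permutation `σ` such that zeroing out the entries `(i, σ i)`
of `S` yields a matrix of degree at most `k - 1`; equivalently, `σ` can be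
chosen so that `S i (σ i) = 1` for every row `i` containing exactly `k` ones
and `S (σ⁻¹ j) j = 1` for every column `j` containing exactly `k` ones. -/
theorem exists_permutation_reducing_degree {n : ℕ}
    (S : Matrix (Fin n) (Fin n) ℝ)
    (hS : ∀ i j, S i j = 0 ∨ S i j = 1)
    (k : ℕ) (hk : 1 ≤ k) (hdeg : degree S = k) :
    ∃ σ : Equiv.Perm (Fin n),
      degree (Matrix.of fun i j => if σ i = j then 0 else S i j) ≤ k - 1 ∧
      (∀ i, (univ.filter fun j => S i j ≠ 0).card = k → S i (σ i) = 1) ∧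
      (∀ j, (univ.filter fun i => S i j ≠ 0).card = k → S (σ.symm j) j = 1) := by
  classical
  -- row and column counts
  set rc : Fin n → ℕ := fun i => (univ.filter fun j => S i j ≠ 0).card with hrc_def
  set cc : Fin n → ℕ := fun j => (univ.filter fun i => S i j ≠ 0).card with hcc_def
  have hrck : ∀ i, rc i ≤ k := by
    intro i
    rw [← hdeg]
    exact le_trans (Finset.le_sup (Finset.mem_univ i)) (le_max_left _ _)
  have hcck : ∀ j, cc j ≤ k := by
    intro j
    rw [← hdeg]
    exact le_trans (Finset.le_sup (Finset.mem_univ j)) (le_max_right _ _)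
  -- the bipartite compatibility relation
  set R : Fin n → Fin n → Prop := fun i j => (rc i = k ∨ cc j = k) → S i j = 1 with hR_def
  set t : Fin n → Finset (Fin n) := fun i => univ.filter fun j => R i j with ht_def
  -- Hall's condition
  have hall : ∀ A : Finset (Fin n), A.card ≤ (A.biUnion t).card := by
    intro A
    set N := A.biUnion t with hN
    by_cases hA : ∀ i ∈ A, rc i = k
    · -- all rows in A are full
      have hsub : ∀ i ∈ A, (univ.filter fun j => S i j ≠ 0) ⊆ N := by
        intro i hi j hj
        simp only [mem_filter, mem_univ, true_and] at hj
        refine Finset.mem_biUnion.mpr ⟨i, hi, ?_⟩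
        simp only [ht_def, mem_filter, mem_univ, true_and, hR_def]
        intro _
        rcases hS i j with h0 | h1
        · exact absurd h0 hj
        · exact h1
      have h1 : k * A.card ≤ ∑ i ∈ A, (N.filter fun j => S i j ≠ 0).card := by
        rw [mul_comm, ← smul_eq_mul]
        apply Finset.card_nsmul_le_sum
        intro i hi
        have hss : (univ.filter fun j => S i j ≠ 0) ⊆ N.filter fun j => S i j ≠ 0 := by
          intro j hj
          exact mem_filter.mpr ⟨hsub i hi hj, (mem_filter.mp hj).2⟩
        calc k = rc i := (hA i hi).symm
        _ ≤ _ := Finset.card_le_card hss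
      have h2 : ∑ j ∈ N, (A.filter fun i => S i j ≠ 0).card ≤ k * N.card := by
        rw [mul_comm, ← smul_eq_mul]
        apply Finset.sum_le_card_nsmul
        intro j _
        exact le_trans (Finset.card_le_card
          (Finset.filter_subset_filter _ (Finset.subset_univ A))) (hcck j)
      have hswap := sum_card_filter_comm (fun i j => S i j ≠ 0) A N
      have : k * A.card ≤ k * N.card := by
        calc k * A.card ≤ ∑ i ∈ A, (N.filter fun j => S i j ≠ 0).card := h1
        _ = ∑ j ∈ N, (A.filter fun i => S i j ≠ 0).card := hswap
        _ ≤ k * N.card := h2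
      exact Nat.le_of_mul_le_mul_left this (by omega)
    · -- some row in A is not full
      push_neg at hA
      obtain ⟨i₀, hi₀A, hi₀⟩ := hA
      set B := univ.filter (fun j => cc j = k ∧ ∀ i ∈ A, S i j = 0) with hB
      have hNB : ∀ j, j ∉ N → j ∈ B := by
        intro j hj
        have hnot : ∀ i ∈ A, ¬ R i j := by
          intro i hi hR
          exact hj (Finset.mem_biUnion.mpr ⟨i, hi, by
            simp only [ht_def, mem_filter, mem_univ, true_and]; exact hR⟩)
        have hzero : ∀ i ∈ A, S i j = 0 := by
          intro i hi
          rcases hS i j with h | h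
          · exact h
          · exact absurd (fun _ => h) (hnot i hi)
        have hccj : cc j = k := by
          have h := hnot i₀ hi₀A
          simp only [hR_def] at h
          push_neg at h
          rcases h.1 with h' | h'
          · exact absurd h' hi₀
          · exact h'
        exact mem_filter.mpr ⟨mem_univ j, hccj, hzero⟩
      have hcover : n ≤ N.card + B.card := by
        have hsub : (univ : Finset (Fin n)) ⊆ N ∪ B := by
          intro j _
          by_cases h : j ∈ N
          · exact Finset.mem_union_left _ h
          · exact Finset.mem_union_right _ (hNB j h)
        calc n = (univ : Finset (Fin n)).card := by simp
        _ ≤ (N ∪ B).card := Finset.card_le_card hsub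
        _ ≤ N.card + B.card := Finset.card_union_le _ _
      -- the ones of each column in B lie outside the rows of A
      have hBbound : k * B.card ≤ k * (n - A.card) := by
        have hA_sub : A ⊆ univ := Finset.subset_univ A
        have hcompl : (univ \ A).card = n - A.card := by
          rw [Finset.card_sdiff_of_subset hA_sub, Finset.card_univ, Fintype.card_fin]
        have h1 : k * B.card ≤ ∑ j ∈ B, ((univ \ A).filter fun i => S i j ≠ 0).card := by
          rw [mul_comm, ← smul_eq_mul]
          apply Finset.card_nsmul_le_sum
          intro j hj
          obtain ⟨-, hjk, hjz⟩ := mem_filter.mp hj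
          have hsubset : (univ.filter fun i => S i j ≠ 0) ⊆
              (univ \ A).filter fun i => S i j ≠ 0 := by
            intro i hi
            obtain ⟨-, hi2⟩ := mem_filter.mp hi
            refine mem_filter.mpr ⟨Finset.mem_sdiff.mpr ⟨mem_univ i, ?_⟩, hi2⟩
            intro hiA
            exact hi2 (hjz i hiA)
          calc k = cc j := hjk.symm
          _ ≤ _ := Finset.card_le_card hsubset
        have h2 : ∑ i ∈ univ \ A, (B.filter fun j => S i j ≠ 0).card ≤ k * (n - A.card) := by
          rw [← hcompl, mul_comm, ← smul_eq_mul]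
          apply Finset.sum_le_card_nsmul
          intro i _
          exact le_trans (Finset.card_le_card
            (Finset.filter_subset_filter _ (Finset.subset_univ B))) (hrck i)
        have hswap := sum_card_filter_comm (fun i j => S i j ≠ 0) (univ \ A) B
        calc k * B.card ≤ ∑ j ∈ B, ((univ \ A).filter fun i => S i j ≠ 0).card := h1
        _ = ∑ i ∈ univ \ A, (B.filter fun j => S i j ≠ 0).card := hswap.symm
        _ ≤ k * (n - A.card) := h2
      have hBle : B.card ≤ n - A.card := Nat.le_of_mul_le_mul_left hBbound (by omega)
      have hAn : A.card ≤ n := by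
        calc A.card ≤ (univ : Finset (Fin n)).card := Finset.card_le_univ A
        _ = n := by simp
      omega
  -- apply Hall's marriage theorem
  obtain ⟨f, hfinj, hf⟩ := (Finset.all_card_le_biUnion_card_iff_exists_injective t).mp hall
  have hfR : ∀ i, R i (f i) := by
    intro i
    have := hf i
    simp only [ht_def, mem_filter, mem_univ, true_and] at this
    exact this
  let σ : Equiv.Perm (Fin n) := Equiv.ofBijective f (Finite.injective_iff_bijective.mp hfinj)
  have hσ : ∀ i, σ i = f i := fun i => rfl
  refine ⟨σ, ?_, ?_, ?_⟩
  · -- degree bound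
    unfold degree
    apply max_le
    · apply Finset.sup_le
      intro i _
      have hsub : (univ.filter fun j =>
            (Matrix.of fun i j => if σ i = j then 0 else S i j) i j ≠ 0)
          ⊆ (univ.filter fun j => S i j ≠ 0).erase (σ i) := by
        intro j hj
        simp only [mem_filter, mem_univ, true_and, Matrix.of_apply] at hj
        by_cases h : σ i = j
        · simp [h] at hj
        · refine Finset.mem_erase.mpr ⟨fun e => h e.symm,
            mem_filter.mpr ⟨mem_univ j, ?_⟩⟩
          simpa [h] using hj
      refine le_trans (Finset.card_le_card hsub) ?_
      by_cases hfull : rc i = k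
      · have h1 : S i (σ i) = 1 := hfR i (Or.inl hfull)
        have hmem : σ i ∈ univ.filter fun j => S i j ≠ 0 := by
          simp [h1]
        rw [Finset.card_erase_of_mem hmem]
        have : (univ.filter fun j => S i j ≠ 0).card = k := hfull
        omega
      · have h1 : rc i ≤ k := hrck i
        have h2 : ((univ.filter fun j => S i j ≠ 0).erase (σ i)).card
            ≤ (univ.filter fun j => S i j ≠ 0).card :=
          Finset.card_le_card (Finset.erase_subset _ _)
        have h3 : (univ.filter fun j => S i j ≠ 0).card = rc i := rfl
        omega
    · apply Finset.sup_le
      intro j _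
      have hsub : (univ.filter fun i =>
            (Matrix.of fun i j => if σ i = j then 0 else S i j) i j ≠ 0)
          ⊆ (univ.filter fun i => S i j ≠ 0).erase (σ.symm j) := by
        intro i hi
        simp only [mem_filter, mem_univ, true_and, Matrix.of_apply] at hi
        by_cases h : σ i = j
        · simp [h] at hi
        · refine Finset.mem_erase.mpr ⟨?_, mem_filter.mpr ⟨mem_univ i, ?_⟩⟩
          · intro he
            exact h (by rw [he, Equiv.apply_symm_apply])
          · simpa [h] using hi
      refine le_trans (Finset.card_le_card hsub) ?_
      by_cases hfull : cc j = k
      · have hfs : σ (σ.symm j) = j := σ.apply_symm_apply j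
        have h1 : S (σ.symm j) j = 1 := by
          have := hfR (σ.symm j)
          rw [hR_def] at this
          rw [← hσ (σ.symm j)] at this
          rw [hfs] at this
          exact this (Or.inr hfull)
        have hmem : σ.symm j ∈ univ.filter fun i => S i j ≠ 0 := by
          simp [h1]
        rw [Finset.card_erase_of_mem hmem]
        have : (univ.filter fun i => S i j ≠ 0).card = k := hfull
        omega
      · have h1 : cc j ≤ k := hcck j
        have h2 : ((univ.filter fun i => S i j ≠ 0).erase (σ.symm j)).card
            ≤ (univ.filter fun i => S i j ≠ 0).card :=
          Finset.card_le_card (Finset.erase_subset _ _)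
        have h3 : (univ.filter fun i => S i j ≠ 0).card = cc j := rfl
        omega
  · intro i hi
    exact hfR i (Or.inl hi)
  · intro j hj
    have hfs : σ (σ.symm j) = j := σ.apply_symm_apply j
    have := hfR (σ.symm j)
    rw [hR_def] at this
    rw [← hσ (σ.symm j)] at this
    rw [hfs] at this
    exact this (Or.inr hj)
end

section
/- Let D be an n×n nonnegative real demand matrix, let δ > 0 and s ≥ 1, and consider any schedule of D over s parallel switches with reconfiguration delay δ that covers D. If some row or some column of D has k_i ≥ 1 nonzero entries whose sum is w_i, then the makespan of the schedule is at least (w_i + δ·max(k_i, s))/s. -/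
open Finset

/-- A configuration of an optical switch: a permutation of the `n` ports
together with a (time) weight. -/
abbrev Config (n : ℕ) := Equiv.Perm (Fin n) × ℝ

/-- A schedule over `s` parallel switches assigns to each switch a finite
list of configurations. -/
abbrev Schedule (n s : ℕ) := Fin s → List (Config n)

/-- All configuration weights of the schedule are positive. -/
def ValidWeights {n s : ℕ} (S : Schedule n s) : Prop :=
  ∀ h : Fin s, ∀ c ∈ S h, 0 < c.2

/-- Total weight of all configurations (over all switches) servicing entry `(i, j)`,
i.e. whose permutation maps `i` to `j`. -/
def servedWeight {n s : ℕ} (S : Schedule n s) (i j : Fin n) : ℝ :=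
  ∑ h : Fin s, (((S h).filter (fun c => decide (c.1 i = j))).map Prod.snd).sum

/-- The schedule covers the demand matrix `D`. -/
def Covers {n s : ℕ} (D : Matrix (Fin n) (Fin n) ℝ) (S : Schedule n s) : Prop :=
  ∀ i j : Fin n, D i j ≤ servedWeight S i j

/-- The load of switch `h`: each configuration contributes the reconfiguration
delay `δ` plus its weight. -/
def load {n s : ℕ} (δ : ℝ) (S : Schedule n s) (h : Fin s) : ℝ :=
  ((S h).map (fun c => δ + c.2)).sum

/-- The makespan of the schedule: the maximum load over the switches. -/
noncomputable def makespan {n s : ℕ} (δ : ℝ) (S : Schedule n s) : ℝ :=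
  ⨆ h : Fin s, load δ S h

/-!
Every configuration services exactly one entry of the fixed line, and an entry with positive
demand is serviced by at least one configuration; hence the configurations servicing the nonzero
entries of the line cost at least `w + δ k` in total, shared by the `s` switches. Also every switch
is loaded at least `δ` plus the weight it spends on the line: if it spends any, it pays a delay
for it, and otherwise the makespan is at least `δ` anyway. Summing over the switches gives
`w + δ s ≤ s · makespan`.
-/

namespace List

theorem sum_fiberwise {α β M : Type*} [Fintype β] [DecidableEq β] [AddCommMonoid M]
    (l : List α) (f : α → β) (g : α → M) :
    ∑ j, ((l.filter (f · = j)).map g).sum = (l.map g).sum := by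
  induction l with
  | nil => simp
  | cons c l ih =>
    rw [map_cons, sum_cons, ← ih, ← Fintype.sum_ite_eq (f c) fun _ => g c,
      ← Finset.sum_add_distrib]
    refine Finset.sum_congr rfl fun j _ => ?_
    by_cases h : f c = j <;> simp [h]

theorem sum_map_const_add {α R : Type*} [NonAssocSemiring R] (δ : R) (l : List α)
    (g : α → R) :
    (l.map (δ + g ·)).sum = l.length * δ + (l.map g).sum := by
  simp [sum_map_add]

end List

theorem add_sum_le_sum_map_const_add {ι α : Type*} {t : Finset ι} {L : ι → List α} {i : ι}
    (hi : i ∈ t) (hne : L i ≠ []) {δ : ℝ} (hδ : 0 ≤ δ) (g : α → ℝ) :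
    δ + ∑ k ∈ t, ((L k).map g).sum ≤ ∑ k ∈ t, ((L k).map (δ + g ·)).sum := by
  have hlen : δ ≤ ∑ k ∈ t, ((L k).length : ℝ) * δ := calc
    δ ≤ (L i).length * δ :=
      le_mul_of_one_le_left hδ (by exact_mod_cast List.length_pos_iff.2 hne)
    _ ≤ ∑ k ∈ t, ((L k).length : ℝ) * δ :=
      single_le_sum (f := fun k => ((L k).length : ℝ) * δ) (fun k _ => by positivity) hi
  simp only [List.sum_map_const_add, sum_add_distrib]
  linarith

variable {n s : ℕ} {δ : ℝ} {S : Schedule n s}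

/-- With `f c` the entry that configuration `c` services on a fixed line (`c.1 i` on row `i`,
`c.1.symm j` on column `j`), the configurations of switch `h` servicing entry `j` of the line. -/
def fiber (S : Schedule n s) (f : Config n → Fin n) (h : Fin s) (j : Fin n) : List (Config n) :=
  (S h).filter (f · = j)

theorem servedWeight_eq_sum_fiber_row (S : Schedule n s) (i j : Fin n) :
    servedWeight S i j = ∑ h, ((fiber S (·.1 i) h j).map Prod.snd).sum := rfl

theorem servedWeight_eq_sum_fiber_col (S : Schedule n s) (i j : Fin n) :
    servedWeight S i j = ∑ h, ((fiber S (·.1.symm j) h i).map Prod.snd).sum := by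
  simp only [servedWeight, fiber, Equiv.symm_apply_eq, eq_comm (a := j)]

theorem delta_add_weight_nonneg (hδ : 0 ≤ δ) (hval : ValidWeights S) {h : Fin s} {c : Config n}
    (hc : c ∈ S h) : 0 ≤ δ + c.2 :=
  add_nonneg hδ (hval h c hc).le

theorem delta_le_load_of_mem (hδ : 0 ≤ δ) (hval : ValidWeights S) {h : Fin s} {c : Config n}
    (hc : c ∈ S h) : δ ≤ load δ S h := calc
  δ ≤ δ + c.2 := le_add_of_nonneg_right (hval h c hc).le
  _ ≤ load δ S h := List.single_le_sum
    (List.forall_mem_map.2 fun _ hc => delta_add_weight_nonneg hδ hval hc) _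
    (List.mem_map_of_mem hc)

theorem load_le_makespan (δ : ℝ) (S : Schedule n s) (h : Fin s) :
    load δ S h ≤ makespan δ S :=
  le_ciSup (Set.finite_range _).bddAbove h

theorem makespan_nonneg (hδ : 0 ≤ δ) (hval : ValidWeights S) : 0 ≤ makespan δ S :=
  Real.iSup_nonneg fun _ => List.sum_nonneg <| List.forall_mem_map.2 fun _ hc =>
    delta_add_weight_nonneg hδ hval hc

theorem sum_fiber_load_le_load (hδ : 0 ≤ δ) (hval : ValidWeights S) (f : Config n → Fin n)
    (J : Finset (Fin n)) (h : Fin s) :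
    ∑ j ∈ J, ((fiber S f h j).map (δ + ·.2)).sum ≤ load δ S h := calc
  _ ≤ ∑ j, ((fiber S f h j).map (δ + ·.2)).sum :=
    sum_le_sum_of_subset_of_nonneg (subset_univ J) fun _ _ _ =>
      List.sum_nonneg <| List.forall_mem_map.2 fun _ hc =>
        delta_add_weight_nonneg hδ hval (List.mem_of_mem_filter hc)
  _ = load δ S h := List.sum_fiberwise _ _ _

theorem exists_fiber_ne_nil_of_sum_pos {f : Config n → Fin n} {j : Fin n}
    (hpos : 0 < ∑ h, ((fiber S f h j).map Prod.snd).sum) : ∃ h, fiber S f h j ≠ [] := by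
  by_contra! hnil
  simp [hnil] at hpos

section Line

variable (hδ : 0 ≤ δ) (hval : ValidWeights S) {f : Config n → Fin n} {J : Finset (Fin n)}
  {g : Fin n → ℝ} (hg : ∀ j ∈ J, 0 < g j)
  (hcov : ∀ j ∈ J, g j ≤ ∑ h, ((fiber S f h j).map Prod.snd).sum)
include hδ hval hg hcov

theorem delta_le_makespan (hJ : J.Nonempty) : δ ≤ makespan δ S := by
  obtain ⟨j, hj⟩ := hJ
  obtain ⟨h, hne⟩ := exists_fiber_ne_nil_of_sum_pos ((hg j hj).trans_le (hcov j hj))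
  obtain ⟨c, hc⟩ := List.exists_mem_of_ne_nil _ hne
  exact (delta_le_load_of_mem hδ hval (List.mem_of_mem_filter hc)).trans (load_le_makespan δ S h)

theorem sum_add_mul_card_le_makespan_mul : ∑ j ∈ J, g j + δ * #J ≤ makespan δ S * s := calc
  ∑ j ∈ J, g j + δ * #J = ∑ j ∈ J, (δ + g j) := by
    rw [sum_add_distrib, sum_const, nsmul_eq_mul]; ring
  _ ≤ ∑ j ∈ J, ∑ h, ((fiber S f h j).map (δ + ·.2)).sum := sum_le_sum fun j hj => by
    obtain ⟨h, hne⟩ := exists_fiber_ne_nil_of_sum_pos ((hg j hj).trans_le (hcov j hj))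
    exact (add_le_add le_rfl (hcov j hj)).trans
      (add_sum_le_sum_map_const_add (mem_univ h) hne hδ _)
  _ = ∑ h, ∑ j ∈ J, ((fiber S f h j).map (δ + ·.2)).sum := sum_comm
  _ ≤ ∑ h : Fin s, makespan δ S := sum_le_sum fun h _ =>
    (sum_fiber_load_le_load hδ hval f J h).trans (load_le_makespan δ S h)
  _ = makespan δ S * s := by simp [mul_comm]

theorem delta_add_sum_fiber_weight_le_makespan (hJ : J.Nonempty) (h : Fin s) :
    δ + ∑ j ∈ J, ((fiber S f h j).map Prod.snd).sum ≤ makespan δ S := by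
  by_cases hne : ∃ j ∈ J, fiber S f h j ≠ []
  · obtain ⟨j, hj, hne⟩ := hne
    calc _ ≤ ∑ k ∈ J, ((fiber S f h k).map (δ + ·.2)).sum :=
          add_sum_le_sum_map_const_add hj hne hδ _
      _ ≤ load δ S h := sum_fiber_load_le_load hδ hval f J h
      _ ≤ makespan δ S := load_le_makespan δ S h
  · push Not at hne
    rw [sum_eq_zero fun j hj => by simp [hne j hj], add_zero]
    exact delta_le_makespan hδ hval hg hcov hJ

theorem sum_add_mul_le_makespan_mul (hJ : J.Nonempty) :
    ∑ j ∈ J, g j + δ * s ≤ makespan δ S * s := calc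
  ∑ j ∈ J, g j + δ * s
      ≤ ∑ j ∈ J, ∑ h, ((fiber S f h j).map Prod.snd).sum + ∑ _h : Fin s, δ := by
    simpa [mul_comm] using sum_le_sum hcov
  _ = ∑ h, (δ + ∑ j ∈ J, ((fiber S f h j).map Prod.snd).sum) := by
    rw [sum_comm, add_comm, sum_add_distrib]
  _ ≤ ∑ _h : Fin s, makespan δ S :=
    sum_le_sum fun h _ => delta_add_sum_fiber_weight_le_makespan hδ hval hg hcov hJ h
  _ = makespan δ S * s := by simp [mul_comm]

theorem sum_add_mul_max_le_makespan_mul (hJ : J.Nonempty) :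
    ∑ j ∈ J, g j + δ * max (#J : ℝ) s ≤ makespan δ S * s := by
  rcases le_total (#J : ℝ) s with hle | hle
  · rw [max_eq_right hle]; exact sum_add_mul_le_makespan_mul hδ hval hg hcov hJ
  · rw [max_eq_left hle]; exact sum_add_mul_card_le_makespan_mul hδ hval hg hcov

end Line

theorem lower_bound_one_general {n s : ℕ}
    (D : Matrix (Fin n) (Fin n) ℝ) (hD : ∀ i j, 0 ≤ D i j)
    (δ : ℝ) (hδ : 0 < δ)
    (S : Schedule n s) (hval : ValidWeights S) (hcov : Covers D S)
    (k : ℕ) (hk : 1 ≤ k) (w : ℝ)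
    (hrc :
      (∃ i, (univ.filter fun j => D i j ≠ 0).card = k ∧
        ∑ j ∈ univ.filter (fun j => D i j ≠ 0), D i j = w) ∨
      (∃ j, (univ.filter fun i => D i j ≠ 0).card = k ∧
        ∑ i ∈ univ.filter (fun i => D i j ≠ 0), D i j = w)) :
    (w + δ * max (k : ℝ) (s : ℝ)) / s ≤ makespan δ S := by
  refine div_le_of_le_mul₀ s.cast_nonneg (makespan_nonneg hδ.le hval) ?_
  rcases hrc with ⟨i, rfl, rfl⟩ | ⟨j, rfl, rfl⟩
  · exact sum_add_mul_max_le_makespan_mul hδ.le hval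
      (fun j hj => (hD i j).lt_of_ne' (mem_filter.1 hj).2)
      (fun j _ => (hcov i j).trans_eq (servedWeight_eq_sum_fiber_row S i j)) (card_pos.1 hk)
  · exact sum_add_mul_max_le_makespan_mul hδ.le hval
      (fun i hi => (hD i j).lt_of_ne' (mem_filter.1 hi).2)
      (fun i _ => (hcov i j).trans_eq (servedWeight_eq_sum_fiber_col S i j)) (card_pos.1 hk)

/-- **Lower bound 1.** If some row or some column of `D` has `k ≥ 1` nonzero
entries whose sum is `w`, then the makespan of any covering schedule over `s`
parallel switches with reconfiguration delay `δ > 0` is at least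
`(w + δ·max(k, s)) / s`. -/
theorem lower_bound_one {n s : ℕ} (hs : 1 ≤ s)
    (D : Matrix (Fin n) (Fin n) ℝ) (hD : ∀ i j, 0 ≤ D i j)
    (δ : ℝ) (hδ : 0 < δ)
    (S : Schedule n s) (hval : ValidWeights S) (hcov : Covers D S)
    (k : ℕ) (hk : 1 ≤ k) (w : ℝ)
    (hrc :
      (∃ i, (univ.filter fun j => D i j ≠ 0).card = k ∧
        ∑ j ∈ univ.filter (fun j => D i j ≠ 0), D i j = w) ∨
      (∃ j, (univ.filter fun i => D i j ≠ 0).card = k ∧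
        ∑ i ∈ univ.filter (fun i => D i j ≠ 0), D i j = w)) :
    (w + δ * max (k : ℝ) (s : ℝ)) / s ≤ makespan δ S :=
  lower_bound_one_general D hD δ hδ S hval hcov k hk w hrc
end

section
/- Let D be an n×n nonnegative real demand matrix, let δ > 0 and s ≥ 1, and consider a schedule of D over s parallel switches with reconfiguration delay δ that covers D. Suppose some row or some column of D has exactly s nonzero entries, and suppose the schedule uses s + m configurations in total across all switches, for some m ≥ 0. Then at least s − m of the nonzero entries (i,j) of that row or column are each serviced by exactly one configuration of the schedule, i.e., exactly one configuration (over all switches) has a permutation mapping i to j. -/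
open Finset

/-- Number of configurations (over all switches) servicing entry `(i, j)`. -/
def servedCount {n s : ℕ} (S : Schedule n s) (i j : Fin n) : ℕ :=
  ∑ h : Fin s, ((S h).filter (fun c => decide (c.1 i = j))).length


lemma row_sum {n : ℕ} (i : Fin n) (L : List (Config n)) :
    ∑ j : Fin n, (L.filter (fun c => decide (c.1 i = j))).length = L.length := by
  induction L with
  | nil => simp
  | cons c L ih =>
    have h : ∀ j : Fin n,
        ((c :: L).filter (fun c => decide (c.1 i = j))).length
          = (if c.1 i = j then 1 else 0) + (L.filter (fun c => decide (c.1 i = j))).length := by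
      intro j; by_cases h : c.1 i = j <;> simp [List.filter_cons, h] <;> omega
    simp only [h, Finset.sum_add_distrib, ih, Finset.sum_ite_eq, Finset.mem_univ, if_true]
    simp [List.length_cons]; omega

lemma col_sum {n : ℕ} (j : Fin n) (L : List (Config n)) :
    ∑ i : Fin n, (L.filter (fun c => decide (c.1 i = j))).length = L.length := by
  induction L with
  | nil => simp
  | cons c L ih =>
    have h : ∀ i : Fin n,
        ((c :: L).filter (fun c => decide (c.1 i = j))).length
          = (if i = c.1.symm j then 1 else 0) + (L.filter (fun c => decide (c.1 i = j))).length := by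
      intro i
      have heq : (c.1 i = j) ↔ (i = c.1.symm j) := Equiv.apply_eq_iff_eq_symm_apply _
      by_cases h : i = c.1.symm j <;> simp [List.filter_cons, heq, h] <;> omega
    simp only [h, Finset.sum_add_distrib, ih, Finset.sum_ite_eq', Finset.mem_univ, if_true]
    simp [List.length_cons]; omega

lemma count_lemma {n : ℕ} (s m : ℕ) (A : Finset (Fin n)) (cnt : Fin n → ℕ)
    (hA : A.card = s) (hsum : ∑ x ∈ A, cnt x ≤ s + m)
    (hpos : ∀ x ∈ A, 1 ≤ cnt x) :
    (s : ℤ) - m ≤ ((A.filter fun x => cnt x = 1).card : ℤ) := by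
  set B := A.filter fun x => cnt x = 1 with hB
  have hBsub : B ⊆ A := Finset.filter_subset _ _
  have hsplit : ∑ x ∈ A, cnt x = ∑ x ∈ B, cnt x + ∑ x ∈ A \ B, cnt x := by
    rw [← Finset.sum_sdiff hBsub]; ring
  have h1 : ∑ x ∈ B, cnt x = B.card := by
    rw [Finset.card_eq_sum_ones]
    apply Finset.sum_congr rfl
    intro x hx
    exact (Finset.mem_filter.mp hx).2
  have h2 : 2 * (A \ B).card ≤ ∑ x ∈ A \ B, cnt x := by
    rw [Finset.card_eq_sum_ones, Finset.mul_sum]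
    apply Finset.sum_le_sum
    intro x hx
    have hxA := (Finset.mem_sdiff.mp hx).1
    have hxB := (Finset.mem_sdiff.mp hx).2
    have : cnt x ≠ 1 := by
      intro h; exact hxB (Finset.mem_filter.mpr ⟨hxA, h⟩)
    have := hpos x hxA
    simp [List.length_cons]; omega
  have hcard : (A \ B).card = s - B.card := by
    rw [Finset.card_sdiff_of_subset hBsub, hA]
  have hBle : B.card ≤ s := hA ▸ Finset.card_le_card hBsub
  have key : B.card + 2 * (s - B.card) ≤ s + m := by
    calc B.card + 2 * (s - B.card) = ∑ x ∈ B, cnt x + 2 * (A \ B).card := by rw [h1, hcard]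
    _ ≤ ∑ x ∈ B, cnt x + ∑ x ∈ A \ B, cnt x := by omega
    _ = ∑ x ∈ A, cnt x := hsplit.symm
    _ ≤ s + m := hsum
  have h3 : s ≤ m + B.card := by omega
  have h4 : (s : ℤ) ≤ (m : ℤ) + (B.card : ℤ) := by exact_mod_cast h3
  omega

lemma served_count_pos {n s : ℕ} (S : Schedule n s) (i j : Fin n)
    (hw : 0 < servedWeight S i j) : 1 ≤ servedCount S i j := by
  by_contra hc
  have h0 : servedCount S i j = 0 := by omega
  have hnil : ∀ h : Fin s, (S h).filter (fun c => decide (c.1 i = j)) = [] := by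
    intro h
    have := (Finset.sum_eq_zero_iff.mp h0) h (Finset.mem_univ h)
    exact List.length_eq_zero_iff.mp this
  have : servedWeight S i j = 0 := by
    unfold servedWeight
    apply Finset.sum_eq_zero
    intro h _
    rw [hnil h]
    simp
  linarith

/-- **Lemma 1.** If a row (resp. a column) of `D` has exactly `s` nonzero
entries, and the covering schedule uses `s + m` configurations in total across
the `s` switches, then at least `s - m` of the nonzero entries of that row
(resp. column) are each serviced by exactly one configuration of the schedule. -/
theorem at_least_s_sub_m_whole_elements {n s : ℕ} (hs : 1 ≤ s)
    (D : Matrix (Fin n) (Fin n) ℝ) (hD : ∀ i j, 0 ≤ D i j)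
    (δ : ℝ) (hδ : 0 < δ)
    (S : Schedule n s) (hval : ValidWeights S) (hcov : Covers D S)
    (m : ℕ) (htot : ∑ h : Fin s, (S h).length = s + m) :
    (∀ i : Fin n, (univ.filter fun j => D i j ≠ 0).card = s →
      (s : ℤ) - m ≤
        ((univ.filter fun j : Fin n => D i j ≠ 0 ∧ servedCount S i j = 1).card : ℤ)) ∧
    (∀ j : Fin n, (univ.filter fun i => D i j ≠ 0).card = s →
      (s : ℤ) - m ≤
        ((univ.filter fun i : Fin n => D i j ≠ 0 ∧ servedCount S i j = 1).card : ℤ)) := by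
  constructor
  · intro i hcard
    have hfilt : (univ.filter fun j : Fin n => D i j ≠ 0 ∧ servedCount S i j = 1)
        = (univ.filter fun j => D i j ≠ 0).filter (fun j => servedCount S i j = 1) := by
      rw [Finset.filter_filter]
    rw [hfilt]
    apply count_lemma s m _ _ hcard
    · calc ∑ x ∈ univ.filter fun j => D i j ≠ 0, servedCount S i x
          ≤ ∑ x : Fin n, servedCount S i x :=
            Finset.sum_le_sum_of_subset (Finset.filter_subset _ _)
      _ = ∑ h : Fin s, (S h).length := by
            unfold servedCount; rw [Finset.sum_comm]
            exact Finset.sum_congr rfl fun h _ => row_sum i (S h)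
      _ = s + m := htot
    · intro x hx
      have hxne : D i x ≠ 0 := (Finset.mem_filter.mp hx).2
      have hpos : 0 < D i x := lt_of_le_of_ne (hD i x) (Ne.symm hxne)
      exact served_count_pos S i x (lt_of_lt_of_le hpos (hcov i x))
  · intro j hcard
    have hfilt : (univ.filter fun i : Fin n => D i j ≠ 0 ∧ servedCount S i j = 1)
        = (univ.filter fun i => D i j ≠ 0).filter (fun i => servedCount S i j = 1) := by
      rw [Finset.filter_filter]
    rw [hfilt]
    apply count_lemma s m _ _ hcard
    · calc ∑ x ∈ univ.filter fun i => D i j ≠ 0, servedCount S x j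
          ≤ ∑ x : Fin n, servedCount S x j :=
            Finset.sum_le_sum_of_subset (Finset.filter_subset _ _)
      _ = ∑ h : Fin s, (S h).length := by
            unfold servedCount; rw [Finset.sum_comm]
            exact Finset.sum_congr rfl fun h _ => col_sum j (S h)
      _ = s + m := htot
    · intro x hx
      have hxne : D x j ≠ 0 := (Finset.mem_filter.mp hx).2
      have hpos : 0 < D x j := lt_of_le_of_ne (hD x j) (Ne.symm hxne)
      exact served_count_pos S x j (lt_of_lt_of_le hpos (hcov x j))
end

section
/- Let D be an n×n nonnegative real demand matrix, let δ > 0 and s ≥ 1, and consider a schedule of D over s parallel switches with reconfiguration delay δ that covers D. Suppose some row or some column of D has exactly s nonzero entries, whose values listed in non-increasing order are x₁ ≥ x₂ ≥ ⋯ ≥ x_s > 0. If the schedule uses exactly s + 1 configurations in total across all switches, and no single switch contains two configurations servicing the same entry of that row or column, then the makespan of the schedule is at least 2δ + x_s. -/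
open Finset

lemma aux_sum_length_filter {n : ℕ} (g : Config n → Fin n) (l : List (Config n)) :
    ∑ k : Fin n, (l.filter (fun c => decide (g c = k))).length = l.length := by
  induction l with
  | nil => simp
  | cons a t ih =>
    have hstep : ∀ k : Fin n,
        ((a :: t).filter (fun c => decide (g c = k))).length
          = (if g a = k then 1 else 0) + (t.filter (fun c => decide (g c = k))).length := by
      intro k
      by_cases h : g a = k <;> simp [List.filter_cons, h, Nat.add_comm]
    rw [Finset.sum_congr rfl (fun k _ => hstep k), Finset.sum_add_distrib, ih]
    simp [Finset.sum_ite_eq]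
    omega

lemma aux_key {n s : ℕ} (hs : 1 ≤ s) (δ : ℝ) (hδ : 0 < δ)
    (S : Schedule n s) (hval : ValidWeights S)
    (g : Config n → Fin n) (d : Fin n → ℝ)
    (hcov : ∀ k, d k ≤ ∑ h : Fin s, (((S h).filter (fun c => decide (g c = k))).map Prod.snd).sum)
    (x : ℕ → ℝ)
    (hxpos : ∀ j, 1 ≤ j → j ≤ s → 0 < x j)
    (hxanti : ∀ j₁ j₂, 1 ≤ j₁ → j₁ ≤ j₂ → j₂ ≤ s → x j₂ ≤ x j₁)
    (hmult : ((univ.filter fun k => d k ≠ 0).val.map d) = (Multiset.range s).map fun l => x (l + 1))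
    (htot : ∑ h : Fin s, (S h).length = s + 1)
    (hone : ∀ h k, ((S h).filter (fun c => decide (g c = k))).length ≤ 1) :
    2 * δ + x s ≤ makespan δ S := by
  classical
  set N : Finset (Fin n) := univ.filter (fun k => d k ≠ 0) with hN
  have hNcard : N.card = s := by
    have := congrArg Multiset.card hmult
    simpa using this
  -- every nonzero demand value is at least x s, and is positive
  have hdx : ∀ k ∈ N, x s ≤ d k ∧ 0 < d k := by
    intro k hk
    have hmem : d k ∈ N.val.map d := Multiset.mem_map_of_mem d hk
    rw [hmult] at hmem
    obtain ⟨l, hl, hld⟩ := Multiset.mem_map.mp hmem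
    have hls : l < s := Multiset.mem_range.mp hl
    have hp : 0 < x (l + 1) := hxpos (l + 1) (by omega) (by omega)
    have ha : x s ≤ x (l + 1) := hxanti (l + 1) s (by omega) (by omega) le_rfl
    constructor <;> linarith [hld.symm ▸ hp, hld ▸ ha, hld]
  -- number of configurations servicing entry k
  set m : Fin n → ℕ := fun k => ∑ h : Fin s, ((S h).filter (fun c => decide (g c = k))).length
    with hm
  have hsum_m : ∑ k : Fin n, m k = s + 1 := by
    rw [hm]
    rw [Finset.sum_comm]
    simp only [aux_sum_length_filter]
    exact htot
  have hm1 : ∀ k ∈ N, 1 ≤ m k := by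
    intro k hk
    by_contra hcon
    have h0 : m k = 0 := by omega
    have hall : ∀ h' : Fin s, ((S h').filter (fun c => decide (g c = k))) = [] := by
      intro h'
      rw [← List.length_eq_zero_iff]
      exact Nat.eq_zero_of_le_zero ((Finset.sum_eq_zero_iff.mp h0 h' (mem_univ _)).le)
    have := hcov k
    simp only [hall, List.map_nil, List.sum_nil, Finset.sum_const_zero] at this
    exact absurd this (not_le.mpr (hdx k hk).2)
  -- a sole server has weight at least the demand
  have hsole : ∀ (h0 : Fin s) (c : Config n), c ∈ S h0 → m (g c) = 1 → d (g c) ≤ c.2 := by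
    intro h0 c hc hmk
    have hcF : c ∈ (S h0).filter (fun c' => decide (g c' = g c)) :=
      List.mem_filter.mpr ⟨hc, by simp⟩
    have hlen1 : 1 ≤ ((S h0).filter (fun c' => decide (g c' = g c))).length :=
      List.length_pos_iff.mpr (List.ne_nil_of_mem hcF)
    have hlen0 : ∀ h', h' ≠ h0 → ((S h').filter (fun c' => decide (g c' = g c))).length = 0 := by
      intro h' hne
      by_contra hz
      have hsub : ({h0, h'} : Finset (Fin s)) ⊆ univ := subset_univ _
      have h2' : ((S h0).filter (fun c' => decide (g c' = g c))).length
          + ((S h').filter (fun c' => decide (g c' = g c))).length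
          ≤ ∑ h : Fin s, ((S h).filter (fun c' => decide (g c' = g c))).length := by
        rw [← Finset.sum_pair (f := fun h =>
          ((S h).filter (fun c' => decide (g c' = g c))).length) (Ne.symm hne)]
        exact Finset.sum_le_sum_of_subset hsub
      have h2 : 2 ≤ m (g c) := by
        show 2 ≤ ∑ h : Fin s, ((S h).filter (fun c' => decide (g c' = g c))).length
        omega
      omega
    have hF0 : (S h0).filter (fun c' => decide (g c' = g c)) = [c] := by
      have hl : ((S h0).filter (fun c' => decide (g c' = g c))).length = 1 := by
        have := hone h0 (g c); omega
      obtain ⟨a, ha⟩ := List.length_eq_one_iff.mp hl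
      rw [ha] at hcF
      simp only [List.mem_singleton] at hcF
      rw [ha, hcF]
    calc d (g c) ≤ ∑ h : Fin s, (((S h).filter (fun c' => decide (g c' = g c))).map Prod.snd).sum :=
          hcov (g c)
      _ = c.2 := by
          rw [Finset.sum_eq_single h0]
          · rw [hF0]; simp
          · intro h' _ hne
            rw [List.length_eq_zero_iff.mp (hlen0 h' hne)]
            simp
          · intro habs; exact absurd (mem_univ h0) habs
  -- pigeonhole: some switch has at least two configurations
  obtain ⟨h0, _, hh0⟩ : ∃ h0 ∈ (univ : Finset (Fin s)), 1 < (S h0).length := by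
    apply Finset.exists_lt_of_sum_lt
    rw [htot]
    simp [hs]
  obtain ⟨a, b, t, hL⟩ : ∃ a b t, S h0 = a :: b :: t := by
    obtain ⟨a, t1, h1⟩ : ∃ a t1, S h0 = a :: t1 :=
      List.exists_cons_of_ne_nil (by intro h; rw [h] at hh0; simp at hh0)
    obtain ⟨b, t2, h2⟩ : ∃ b t2, t1 = b :: t2 :=
      List.exists_cons_of_ne_nil (by intro h; rw [h1, h] at hh0; simp at hh0)
    exact ⟨a, b, t2, by rw [h1, h2]⟩
  have haS : a ∈ S h0 := by rw [hL]; simp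
  have hbS : b ∈ S h0 := by rw [hL]; simp
  -- at least one of a, b is a "good" (sole-server of a nonzero entry) config
  have hgood : (g a ∈ N ∧ m (g a) = 1) ∨ (g b ∈ N ∧ m (g b) = 1) := by
    by_contra hcon
    push_neg at hcon
    obtain ⟨hba, hbb⟩ := hcon
    have hne : g a ≠ g b := by
      intro he
      have := hone h0 (g b)
      rw [hL] at this
      simp [List.filter_cons, he] at this
    have hge1 : ∀ c : Config n, c ∈ S h0 → 1 ≤ m (g c) := by
      intro c hc
      have hcF : c ∈ (S h0).filter (fun c' => decide (g c' = g c)) :=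
        List.mem_filter.mpr ⟨hc, by simp⟩
      have hlen1 : 1 ≤ ((S h0).filter (fun c' => decide (g c' = g c))).length :=
        List.length_pos_iff.mpr (List.ne_nil_of_mem hcF)
      calc 1 ≤ ((S h0).filter (fun c' => decide (g c' = g c))).length := hlen1
        _ ≤ m (g c) := Finset.single_le_sum (f := fun h =>
            ((S h).filter (fun c' => decide (g c' = g c))).length)
            (fun _ _ => Nat.zero_le _) (mem_univ h0)
    have hma : (if g a ∈ N then 2 else 1) ≤ m (g a) := by
      by_cases h : g a ∈ N
      · rw [if_pos h]
        have h1 := hm1 (g a) h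
        have h2 := hba h
        have h3 := hge1 a haS
        omega
      · rw [if_neg h]; exact hge1 a haS
    have hmb : (if g b ∈ N then 2 else 1) ≤ m (g b) := by
      by_cases h : g b ∈ N
      · rw [if_pos h]
        have h1 := hm1 (g b) h
        have h2 := hbb h
        have h3 := hge1 b hbS
        omega
      · rw [if_neg h]; exact hge1 b hbS
    -- lower bound the total number of configurations
    have hbound : s + 2 ≤ ∑ k : Fin n, m k := by
      have hf : ∀ k : Fin n,
          (if k ∈ N then 1 else 0) + (if k = g a then 1 else 0) + (if k = g b then 1 else 0)
            ≤ m k := by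
        intro k
        by_cases hka : k = g a
        · rw [hka, if_pos rfl, if_neg hne]
          by_cases h : g a ∈ N
          · rw [if_pos h] at hma ⊢; omega
          · rw [if_neg h] at hma ⊢; omega
        · by_cases hkb : k = g b
          · rw [hkb, if_neg (Ne.symm hne), if_pos rfl]
            by_cases h : g b ∈ N
            · rw [if_pos h] at hmb ⊢; omega
            · rw [if_neg h] at hmb ⊢; omega
          · rw [if_neg hka, if_neg hkb, add_zero, add_zero]
            by_cases h : k ∈ N
            · rw [if_pos h]; exact hm1 k h
            · rw [if_neg h]; exact Nat.zero_le _
      calc s + 2 = ∑ k : Fin n,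
            ((if k ∈ N then 1 else 0) + (if k = g a then 1 else 0)
              + (if k = g b then 1 else 0)) := by
            rw [Finset.sum_add_distrib, Finset.sum_add_distrib]
            rw [Finset.sum_ite_eq' univ (g a) (fun _ => 1),
              Finset.sum_ite_eq' univ (g b) (fun _ => 1)]
            rw [Finset.sum_ite_mem]
            simp [hNcard]
        _ ≤ ∑ k : Fin n, m k := Finset.sum_le_sum (fun k _ => hf k)
    omega
  -- conclude
  have htail : 0 ≤ (t.map fun c => δ + c.2).sum := by
    apply List.sum_nonneg
    intro y hy
    obtain ⟨c, hc, rfl⟩ := List.mem_map.mp hy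
    have : c ∈ S h0 := by rw [hL]; simp [hc]
    have := hval h0 c this
    linarith
  have hload : load δ S h0 = (δ + a.2) + ((δ + b.2) + (t.map fun c => δ + c.2).sum) := by
    rw [load, hL]; simp
  have hpa : 0 < a.2 := hval h0 a haS
  have hpb : 0 < b.2 := hval h0 b hbS
  have hkey : 2 * δ + x s ≤ load δ S h0 := by
    rcases hgood with ⟨hN', hm'⟩ | ⟨hN', hm'⟩
    · have h1 := hsole h0 a haS hm'
      have h2 := (hdx _ hN').1
      rw [hload]; linarith
    · have h1 := hsole h0 b hbS hm'
      have h2 := (hdx _ hN').1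
      rw [hload]; linarith
  calc 2 * δ + x s ≤ load δ S h0 := hkey
    _ ≤ makespan δ S := le_ciSup (Set.Finite.bddAbove (Set.finite_range _)) h0

/-- If some row (resp. column) of `D` has exactly `s` nonzero entries, whose
values in non-increasing order are `x 1 ≥ x 2 ≥ ⋯ ≥ x s > 0`, if the covering
schedule uses exactly `s + 1` configurations in total, and if no single switch
contains two configurations servicing the same entry of that row (resp.
column), then the makespan is at least `2δ + x s`. -/
theorem makespan_ge_two_delta_add_x_s {n s : ℕ} (hs : 1 ≤ s)
    (D : Matrix (Fin n) (Fin n) ℝ) (hD : ∀ i j, 0 ≤ D i j)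
    (δ : ℝ) (hδ : 0 < δ)
    (S : Schedule n s) (hval : ValidWeights S) (hcov : Covers D S)
    (x : ℕ → ℝ)
    (hxpos : ∀ j, 1 ≤ j → j ≤ s → 0 < x j)
    (hxanti : ∀ j₁ j₂, 1 ≤ j₁ → j₁ ≤ j₂ → j₂ ≤ s → x j₂ ≤ x j₁)
    (hx0 : ∀ j, s < j → x j = 0)
    (htot : ∑ h : Fin s, (S h).length = s + 1) :
    (∀ i : Fin n,
      (((univ.filter fun j => D i j ≠ 0).val.map fun j => D i j)
          = (Multiset.range s).map fun l => x (l + 1)) →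
      (∀ h : Fin s, ∀ j : Fin n,
        ((S h).filter (fun c => decide (c.1 i = j))).length ≤ 1) →
      2 * δ + x s ≤ makespan δ S) ∧
    (∀ j : Fin n,
      (((univ.filter fun i => D i j ≠ 0).val.map fun i => D i j)
          = (Multiset.range s).map fun l => x (l + 1)) →
      (∀ h : Fin s, ∀ i : Fin n,
        ((S h).filter (fun c => decide (c.1 i = j))).length ≤ 1) →
      2 * δ + x s ≤ makespan δ S) := by
  constructor
  · intro i hrow hone
    exact aux_key hs δ hδ S hval (fun c => c.1 i) (fun j => D i j)
      (fun k => hcov i k) x hxpos hxanti hrow htot hone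
  · intro j hcol hone
    have hpred : ∀ (k : Fin n) (c : Config n),
        (decide ((c.1).symm j = k)) = (decide (c.1 k = j)) := by
      intro k c
      apply decide_eq_decide.mpr
      rw [Equiv.symm_apply_eq]
      exact eq_comm
    have hfe : ∀ (k : Fin n) (h : Fin s),
        (S h).filter (fun c => decide ((fun c : Config n => (c.1).symm j) c = k))
          = (S h).filter (fun c => decide (c.1 k = j)) := by
      intro k h
      apply List.filter_congr
      intro c _
      exact hpred k c
    apply aux_key hs δ hδ S hval (fun c => (c.1).symm j) (fun i => D i j)
      ?_ x hxpos hxanti hcol htot ?_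
    · intro k
      have := hcov k j
      rw [servedWeight] at this
      calc D k j ≤ ∑ h : Fin s, (((S h).filter (fun c => decide (c.1 k = j))).map Prod.snd).sum :=
            this
        _ = _ := by
            apply Finset.sum_congr rfl
            intro h _
            rw [hfe k h]
    · intro h k
      rw [hfe k h]
      exact hone h k
end

section
/- Let D be an n×n nonnegative real demand matrix, let δ > 0 and s ≥ 1, and consider any schedule of D over s parallel switches with reconfiguration delay δ that covers D. If some row or some column of D has k_i ≥ 1 nonzero entries whose sum is w_i, then the sum of the loads of the s switches is at least w_i + k_i·δ; consequently, the makespan of the schedule is at least (w_i + k_i·δ)/s. -/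
open Finset

lemma list_sum_fiber {n : ℕ} (f : Config n → ℝ) (g : Config n → Fin n)
    (p : Fin n → Config n → Bool)
    (hp : ∀ x c, p x c = true ↔ g c = x)
    (l : List (Config n)) :
    (l.map f).sum = ∑ x : Fin n, ((l.filter (p x)).map f).sum := by
  induction l with
  | nil => simp
  | cons c l ih =>
    have hpc : ∀ x, p x c = decide (g c = x) := by
      intro x; rw [Bool.eq_iff_iff, hp, decide_eq_true_iff]
    simp only [List.map_cons, List.sum_cons, ih, List.filter_cons, hpc,
      decide_eq_true_eq]
    have : ∀ x : Fin n,
        (((if g c = x then c :: l.filter (p x) else l.filter (p x)).map f).sum)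
        = (if g c = x then f c else 0) + ((l.filter (p x)).map f).sum := by
      intro x; split <;> simp
    rw [Finset.sum_congr rfl fun x _ => this x, Finset.sum_add_distrib,
      Finset.sum_ite_eq Finset.univ (g c)]
    simp

lemma sum_map_delta {n : ℕ} (δ : ℝ) (l : List (Config n)) :
    (l.map (fun c => δ + c.2)).sum = δ * l.length + (l.map Prod.snd).sum := by
  induction l with
  | nil => simp
  | cons c l ih => simp [ih]; ring

lemma key {n s : ℕ} (δ : ℝ) (hδ : 0 < δ) (S : Schedule n s)
    (hval : ValidWeights S)
    (p : Fin n → Config n → Bool) (g : Config n → Fin n)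
    (hp : ∀ x c, p x c = true ↔ g c = x)
    (T : Finset (Fin n)) (d : Fin n → ℝ)
    (hd : ∀ x ∈ T, 0 < d x)
    (hcov : ∀ x ∈ T, d x ≤ ∑ h : Fin s, (((S h).filter (p x)).map Prod.snd).sum) :
    (∑ x ∈ T, d x) + T.card * δ ≤ ∑ h : Fin s, load δ S h := by
  have hW : ∀ (h : Fin s) (x : Fin n),
      0 ≤ (((S h).filter (p x)).map Prod.snd).sum := by
    intro h x
    apply List.sum_nonneg
    intro a ha
    obtain ⟨c, hc, rfl⟩ := List.mem_map.mp ha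
    exact le_of_lt (hval h c (List.mem_of_mem_filter hc))
  have hload : ∑ h : Fin s, load δ S h =
      ∑ x : Fin n, ∑ h : Fin s,
        (δ * ((S h).filter (p x)).length + (((S h).filter (p x)).map Prod.snd).sum) := by
    rw [Finset.sum_comm]
    refine Finset.sum_congr rfl fun h _ => ?_
    rw [load, list_sum_fiber _ g p hp]
    exact Finset.sum_congr rfl fun x _ => sum_map_delta δ _
  rw [hload]
  calc (∑ x ∈ T, d x) + T.card * δ = ∑ x ∈ T, (d x + δ) := by
        rw [Finset.sum_add_distrib, Finset.sum_const, nsmul_eq_mul]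
    _ ≤ ∑ x ∈ T, ∑ h : Fin s,
        (δ * ((S h).filter (p x)).length + (((S h).filter (p x)).map Prod.snd).sum) := by
        refine Finset.sum_le_sum fun x hx => ?_
        rw [Finset.sum_add_distrib, ← Finset.mul_sum]
        have hlen : (1 : ℝ) ≤ ∑ h : Fin s, (((S h).filter (p x)).length : ℝ) := by
          by_contra hcon
          push_neg at hcon
          have : ∀ h : Fin s, ((S h).filter (p x)).length = 0 := by
            intro h
            by_contra h0
            have h1 : (1 : ℝ) ≤ ((S h).filter (p x)).length := by
              exact_mod_cast Nat.one_le_iff_ne_zero.mpr h0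
            have h4 : (((S h).filter (p x)).length : ℝ) ≤
                ∑ h : Fin s, (((S h).filter (p x)).length : ℝ) :=
              Finset.single_le_sum (f := fun h => (((S h).filter (p x)).length : ℝ))
                (fun h _ => by positivity) (Finset.mem_univ h)
            have : (1:ℝ) ≤ ∑ h : Fin s, (((S h).filter (p x)).length : ℝ) := le_trans h1 h4
            linarith
          have hz : ∑ h : Fin s, (((S h).filter (p x)).map Prod.snd).sum = 0 := by
            refine Finset.sum_eq_zero fun h _ => ?_
            rw [List.length_eq_zero_iff.mp (this h)]; simp
          have := hcov x hx
          rw [hz] at this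
          exact absurd this (not_le.mpr (hd x hx))
        have h2 := hcov x hx
        have h3 : δ * 1 ≤ δ * ∑ h : Fin s, (((S h).filter (p x)).length : ℝ) :=
          mul_le_mul_of_nonneg_left hlen (le_of_lt hδ)
        push_cast at h3 ⊢
        linarith
    _ ≤ ∑ x : Fin n, ∑ h : Fin s,
        (δ * ((S h).filter (p x)).length + (((S h).filter (p x)).map Prod.snd).sum) := by
        refine Finset.sum_le_sum_of_subset_of_nonneg (Finset.subset_univ T) fun x _ _ => ?_
        refine Finset.sum_nonneg fun h _ => add_nonneg (by positivity) (hW h x)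

/-- If some row or some column of `D` has `k ≥ 1` nonzero entries whose sum is
`w`, then the sum of the loads of the `s` switches of any covering schedule is
at least `w + k·δ`; consequently, the makespan is at least `(w + k·δ)/s`. -/
theorem sum_loads_ge_and_makespan_ge {n s : ℕ} (hs : 1 ≤ s)
    (D : Matrix (Fin n) (Fin n) ℝ) (hD : ∀ i j, 0 ≤ D i j)
    (δ : ℝ) (hδ : 0 < δ)
    (S : Schedule n s) (hval : ValidWeights S) (hcov : Covers D S)
    (k : ℕ) (hk : 1 ≤ k) (w : ℝ)
    (hrc :
      (∃ i, (univ.filter fun j => D i j ≠ 0).card = k ∧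
        ∑ j ∈ univ.filter (fun j => D i j ≠ 0), D i j = w) ∨
      (∃ j, (univ.filter fun i => D i j ≠ 0).card = k ∧
        ∑ i ∈ univ.filter (fun i => D i j ≠ 0), D i j = w)) :
    w + k * δ ≤ ∑ h : Fin s, load δ S h ∧
      (w + k * δ) / s ≤ makespan δ S := by
  have hkey : w + k * δ ≤ ∑ h : Fin s, load δ S h := by
    rcases hrc with ⟨i, hcard, hw⟩ | ⟨j, hcard, hw⟩
    · have := key δ hδ S hval (fun x c => decide (c.1 i = x)) (fun c => c.1 i)
        (fun x c => by simp) (univ.filter fun j => D i j ≠ 0) (fun x => D i x)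
        (fun x hx => lt_of_le_of_ne (hD i x) (Ne.symm (Finset.mem_filter.mp hx).2))
        (fun x _ => hcov i x)
      rw [hw, hcard] at this
      exact this
    · have hp : ∀ (x : Fin n) (c : Config n),
          (decide (c.1 x = j) = true) ↔ c.1.symm j = x := by
        intro x c
        rw [decide_eq_true_iff, Equiv.symm_apply_eq, eq_comm]
      have := key δ hδ S hval (fun x c => decide (c.1 x = j)) (fun c => c.1.symm j)
        hp (univ.filter fun i => D i j ≠ 0) (fun x => D x j)
        (fun x hx => lt_of_le_of_ne (hD x j) (Ne.symm (Finset.mem_filter.mp hx).2))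
        (fun x _ => hcov x j)
      rw [hw, hcard] at this
      exact this
  refine ⟨hkey, ?_⟩
  have hsum : ∑ h : Fin s, load δ S h ≤ s * makespan δ S := by
    calc ∑ h : Fin s, load δ S h ≤ ∑ _h : Fin s, makespan δ S :=
          Finset.sum_le_sum fun h _ =>
            le_ciSup (Set.Finite.bddAbove (Set.finite_range _)) h
      _ = s * makespan δ S := by simp [mul_comm]
  have hs0 : (0:ℝ) < s := by exact_mod_cast hs
  rw [div_le_iff₀ hs0]
  calc w + k * δ ≤ ∑ h : Fin s, load δ S h := hkey
    _ ≤ s * makespan δ S := hsum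
    _ = makespan δ S * s := mul_comm _ _
end

section
/- Let D be an n×n nonnegative real demand matrix, let δ > 0 and s ≥ 1, and consider any schedule of D over s parallel switches with reconfiguration delay δ that covers D. Suppose some row or some column of D has at least one nonzero entry and the sum of its entries is w_i. If the schedule uses c configurations in total across all switches, then the makespan of the schedule is at least (w_i + c·δ)/s. -/
open Finset

lemma sum_filter_unique {n : ℕ} (p : Config n → Fin n → Prop) [∀ c x, Decidable (p c x)]
    (g : Config n → Fin n) (hpg : ∀ c x, p c x ↔ x = g c) (l : List (Config n)) :
    ∑ x : Fin n, ((l.filter (fun c => decide (p c x))).map Prod.snd).sum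
      = (l.map Prod.snd).sum := by
  induction l with
  | nil => simp
  | cons a l ih =>
    have : ∀ x : Fin n,
        (((a :: l).filter (fun c => decide (p c x))).map Prod.snd).sum
        = (if x = g a then a.2 else 0)
          + ((l.filter (fun c => decide (p c x))).map Prod.snd).sum := by
      intro x
      by_cases h : p a x
      · have hx := (hpg a x).mp h
        subst hx
        simp [List.filter_cons, h]
      · have : x ≠ g a := fun hx => h ((hpg a x).mpr hx)
        simp [List.filter_cons, h, this]
    rw [Finset.sum_congr rfl (fun x _ => this x), Finset.sum_add_distrib,
      Finset.sum_ite_eq' Finset.univ (g a), ih]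
    simp

lemma load_eq {n s : ℕ} (δ : ℝ) (S : Schedule n s) (h : Fin s) :
    load δ S h = δ * (S h).length + ((S h).map Prod.snd).sum := by
  unfold load
  induction (S h) with
  | nil => simp
  | cons a l ih => simp [ih]; ring

/-- If some row or some column of `D` has at least one nonzero entry and the
sum of its entries is `w`, and the covering schedule uses `c` configurations in
total across all switches, then the makespan is at least `(w + c·δ)/s`. -/
theorem makespan_ge_of_total_configs {n s : ℕ} (hs : 1 ≤ s)
    (D : Matrix (Fin n) (Fin n) ℝ) (hD : ∀ i j, 0 ≤ D i j)
    (δ : ℝ) (hδ : 0 < δ)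
    (S : Schedule n s) (hval : ValidWeights S) (hcov : Covers D S)
    (w : ℝ)
    (hrc :
      (∃ i, (univ.filter fun j => D i j ≠ 0).Nonempty ∧ ∑ j, D i j = w) ∨
      (∃ j, (univ.filter fun i => D i j ≠ 0).Nonempty ∧ ∑ i, D i j = w))
    (c : ℕ) (hc : ∑ h : Fin s, (S h).length = c) :
    (w + c * δ) / s ≤ makespan δ S := by
  have hspos : (0 : ℝ) < s := by exact_mod_cast hs
  -- total weight
  set W : ℝ := ∑ h : Fin s, ((S h).map Prod.snd).sum with hW
  have hwW : w ≤ W := by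
    rcases hrc with ⟨i, -, hsum⟩ | ⟨j, -, hsum⟩
    · calc w = ∑ j, D i j := hsum.symm
        _ ≤ ∑ j, servedWeight S i j := Finset.sum_le_sum fun j _ => hcov i j
        _ = W := by
          unfold servedWeight
          rw [Finset.sum_comm]
          exact Finset.sum_congr rfl fun h _ =>
            sum_filter_unique (fun c x => c.1 i = x) (fun c => c.1 i)
              (fun c x => eq_comm) (S h)
    · calc w = ∑ i, D i j := hsum.symm
        _ ≤ ∑ i, servedWeight S i j := Finset.sum_le_sum fun i _ => hcov i j
        _ = W := by
          unfold servedWeight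
          rw [Finset.sum_comm]
          refine Finset.sum_congr rfl fun h _ => ?_
          exact sum_filter_unique (fun c x => c.1 x = j) (fun c => c.1.symm j)
            (fun c x => by
              constructor
              · intro hx; exact (Equiv.symm_apply_eq c.1).mpr hx.symm |>.symm ▸ rfl
              · intro hx; rw [hx]; simp) (S h)
  have hsumload : ∑ h : Fin s, load δ S h = δ * c + W := by
    rw [Finset.sum_congr rfl (fun h _ => load_eq δ S h), Finset.sum_add_distrib,
      ← Finset.mul_sum, ← hW]
    norm_cast
    rw [hc]
  have hle : ∀ h : Fin s, load δ S h ≤ makespan δ S := fun h =>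
    le_ciSup (Set.Finite.bddAbove (Set.finite_range _)) h
  have : δ * c + W ≤ s * makespan δ S := by
    rw [← hsumload]
    calc ∑ h : Fin s, load δ S h ≤ ∑ _h : Fin s, makespan δ S :=
          Finset.sum_le_sum fun h _ => hle h
      _ = s * makespan δ S := by simp [mul_comm]
  rw [div_le_iff₀ hspos]
  nlinarith
end

section
/- Let s ≥ 1 be an integer, let δ > 0, let x₁ ≥ x₂ ≥ ⋯ ≥ x_s > 0 be reals with total w = x₁ + ⋯ + x_s, and set x_j = 0 for j > s. If not all of x₁,…,x_s are equal (i.e., x₁ > x_s), then δ + min( x₁, max(x₂, (w + δ)/s, x_s + δ), min_{2 ≤ m ≤ s²} max(x_{m+1}, (w + m·δ)/s) ) > w/s + δ, where the minimum over an empty index range is taken to be +∞. -/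
/-- The lower-bound expression `LB⁽²⁾ = δ + min(x₁, max(x₂, (w+δ)/s, x_s+δ),
min_{2 ≤ m ≤ s²} max(x_{m+1}, (w+m·δ)/s))`, valued in `WithTop ℝ` so that the
minimum over an empty index range (which occurs only when `s = 1`) is `+∞`. -/
noncomputable def LB2 (s : ℕ) (δ w : ℝ) (x : ℕ → ℝ) : WithTop ℝ :=
  (δ : WithTop ℝ) +
    min ((x 1 : ℝ) : WithTop ℝ)
      (min ((max (x 2) (max ((w + δ) / (s : ℝ)) (x s + δ)) : ℝ) : WithTop ℝ)
        ((Finset.Icc 2 (s ^ 2)).inf fun m =>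
          ((max (x (m + 1)) ((w + (m : ℝ) * δ) / (s : ℝ)) : ℝ) : WithTop ℝ)))

/-- If not all of `x 1 ≥ x 2 ≥ ⋯ ≥ x s > 0` are equal (i.e. `x 1 > x s`), then
the refined lower bound `LB⁽²⁾` is strictly larger than the bound
`LB⁽¹⁾ = w/s + δ`, where `w` is the total, `s ≥ 1` and `δ > 0`,
with `x j = 0` for `j > s`. -/
theorem LB2_gt_LB1_of_not_all_equal (s : ℕ) (hs : 1 ≤ s) (δ : ℝ) (hδ : 0 < δ)
    (x : ℕ → ℝ)
    (hxpos : ∀ j, 1 ≤ j → j ≤ s → 0 < x j)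
    (hxanti : ∀ j₁ j₂, 1 ≤ j₁ → j₁ ≤ j₂ → j₂ ≤ s → x j₂ ≤ x j₁)
    (hx0 : ∀ j, s < j → x j = 0)
    (w : ℝ) (hw : w = ∑ j ∈ Finset.range s, x (j + 1))
    (hne : x 1 > x s) :
    ((w / s + δ : ℝ) : WithTop ℝ) < LB2 s δ w x := by
  have hspos : (0 : ℝ) < (s : ℝ) := by positivity
  -- w/s < x 1
  have hwlt : w / (s : ℝ) < x 1 := by
    rw [div_lt_iff₀ hspos]
    have hsum : ∑ j ∈ Finset.range s, x (j + 1) <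
        ∑ _j ∈ Finset.range s, x 1 := by
      apply Finset.sum_lt_sum
      · intro i hi
        exact hxanti 1 (i + 1) le_rfl (by omega) (by simpa using Finset.mem_range.mp hi)
      · refine ⟨s - 1, Finset.mem_range.mpr (by omega), ?_⟩
        have : s - 1 + 1 = s := by omega
        rw [this]; exact hne
    calc w = ∑ j ∈ Finset.range s, x (j + 1) := hw
      _ < ∑ _j ∈ Finset.range s, x 1 := hsum
      _ = x 1 * s := by rw [Finset.sum_const, Finset.card_range]; ring
  have hds : 0 < δ / (s : ℝ) := by positivity
  have key : (w / (s : ℝ) : WithTop ℝ) <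
      min ((x 1 : ℝ) : WithTop ℝ)
        (min ((max (x 2) (max ((w + δ) / (s : ℝ)) (x s + δ)) : ℝ) : WithTop ℝ)
          ((Finset.Icc 2 (s ^ 2)).inf fun m =>
            ((max (x (m + 1)) ((w + (m : ℝ) * δ) / (s : ℝ)) : ℝ) : WithTop ℝ))) := by
    refine lt_min (by exact_mod_cast hwlt) (lt_min ?_ ?_)
    · have : w / (s : ℝ) < (w + δ) / (s : ℝ) := by
        rw [add_div]; linarith
      exact_mod_cast this.trans_le (le_max_left _ _ |>.trans (le_max_right _ _))
    · rw [Finset.lt_inf_iff (lt_top_iff_ne_top.mpr (WithTop.coe_ne_top))]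
      intro m hm
      have hm2 : 2 ≤ m := (Finset.mem_Icc.mp hm).1
      have hmδ : 0 < (m : ℝ) * δ := by
        have : (0 : ℝ) < (m : ℝ) := by exact_mod_cast Nat.lt_of_lt_of_le Nat.zero_lt_two hm2
        positivity
      have : w / (s : ℝ) < (w + (m : ℝ) * δ) / (s : ℝ) := by
        rw [add_div]
        have : 0 < (m : ℝ) * δ / (s : ℝ) := by positivity
        linarith
      exact_mod_cast this.trans_le (le_max_right _ _)
  unfold LB2
  have : ((w / s + δ : ℝ) : WithTop ℝ) = (δ : WithTop ℝ) + ((w / s : ℝ) : WithTop ℝ) := by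
    rw [← WithTop.coe_add]; norm_num [add_comm]
  rw [this]
  exact WithTop.add_lt_add_left WithTop.coe_ne_top key
end

section
/- Let D be an n×n nonnegative real demand matrix and consider a schedule of D over s parallel switches with reconfiguration delay δ > 0 that covers D. Let a ≠ b be two switches with loads L_a and L_b satisfying L_a − L_b > δ, and suppose switch a contains a configuration with permutation σ and weight α such that α > τ, where τ = (L_a − L_b − δ)/2. Then the schedule obtained by replacing this configuration's weight α by α − τ on switch a and adding a new configuration with permutation σ and weight τ to switch b is a valid schedule that still covers D; moreover, in the new schedule the loads of switches a and b both equal μ = (L_a + L_b + δ)/2, the loads of all other switches are unchanged, and μ < L_a. -/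
open Finset

/-- **Equalize step.** Given a covering schedule, two switches `a ≠ b` with
loads `Lₐ - L_b > δ`, and a configuration `(σ, α)` on switch `a` with
`α > τ = (Lₐ - L_b - δ)/2`: replacing that configuration's weight by `α - τ`
on switch `a` and adding a new configuration `(σ, τ)` to switch `b` yields a
valid schedule that still covers `D`; the new loads of `a` and `b` both equal
`μ = (Lₐ + L_b + δ)/2`, all other loads are unchanged, and `μ < Lₐ`. -/
theorem equalize_step {n s : ℕ}
    (D : Matrix (Fin n) (Fin n) ℝ) (hD : ∀ i j, 0 ≤ D i j)
    (δ : ℝ) (hδ : 0 < δ)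
    (S : Schedule n s) (hval : ValidWeights S) (hcov : Covers D S)
    (a b : Fin s) (hab : a ≠ b)
    (hL : load δ S a - load δ S b > δ)
    (σ : Equiv.Perm (Fin n)) (α : ℝ) (l₁ l₂ : List (Config n))
    (hSa : S a = l₁ ++ (σ, α) :: l₂)
    (τ μ : ℝ)
    (hτ : τ = (load δ S a - load δ S b - δ) / 2)
    (hμ : μ = (load δ S a + load δ S b + δ) / 2)
    (hα : α > τ)
    (S' : Schedule n s)
    (hS'a : S' a = l₁ ++ (σ, α - τ) :: l₂)
    (hS'b : S' b = (σ, τ) :: S b)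
    (hS'other : ∀ h, h ≠ a → h ≠ b → S' h = S h) :
    ValidWeights S' ∧ Covers D S' ∧
      load δ S' a = μ ∧ load δ S' b = μ ∧
      (∀ h, h ≠ a → h ≠ b → load δ S' h = load δ S h) ∧
      μ < load δ S a := by
  have hτpos : 0 < τ := by rw [hτ]; linarith
  have hLa : load δ S a = ((l₁ ++ (σ, α) :: l₂).map (fun c => δ + c.2)).sum := by
    rw [load, hSa]
  have hLa' : load δ S' a = load δ S a - τ := by
    rw [load, hS'a, hLa]
    simp [List.sum_append]
    ring
  have hLb' : load δ S' b = load δ S b + δ + τ := by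
    rw [load, hS'b, load]
    simp
    ring
  refine ⟨?_, ?_, ?_, ?_, ?_, ?_⟩
  · intro h c hc
    by_cases ha : h = a
    · rw [ha, hS'a] at hc
      rcases List.mem_append.1 hc with h1 | h2
      · exact hval a c (hSa ▸ List.mem_append.2 (Or.inl h1))
      · rcases List.mem_cons.1 h2 with h3 | h4
        · rw [h3]; simp; linarith
        · exact hval a c (hSa ▸ List.mem_append.2 (Or.inr (List.mem_cons_of_mem _ h4)))
    · by_cases hb : h = b
      · rw [hb, hS'b] at hc
        rcases List.mem_cons.1 hc with h3 | h4
        · rw [h3]; exact hτpos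
        · exact hval b c h4
      · rw [hS'other h ha hb] at hc; exact hval h c hc
  · intro i j
    have hkey : servedWeight S' i j = servedWeight S i j := by
      set t : ℝ := if σ i = j then τ else 0 with ht
      have hfun : ∀ h : Fin s,
          (((S' h).filter (fun c => decide (c.1 i = j))).map Prod.snd).sum
          = (((S h).filter (fun c => decide (c.1 i = j))).map Prod.snd).sum
            + (if h = a then -t else 0) + (if h = b then t else 0) := by
        intro h
        by_cases ha : h = a
        · subst ha
          rw [if_neg hab, if_pos rfl, hS'a, hSa]
          by_cases hσ : σ i = j <;>
            simp [List.filter_append, List.filter_cons, hσ, ht] <;> ring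
        · by_cases hb : h = b
          · subst hb
            rw [if_neg ha, if_pos rfl, hS'b]
            by_cases hσ : σ i = j <;> simp [List.filter_cons, hσ, ht] <;> ring
          · rw [hS'other h ha hb, if_neg ha, if_neg hb]; ring
      unfold servedWeight
      rw [Finset.sum_congr rfl (fun h _ => hfun h)]
      simp [Finset.sum_add_distrib, Finset.sum_ite_eq']
    rw [hkey]; exact hcov i j
  · rw [hLa', hτ, hμ]; ring
  · rw [hLb', hτ, hμ]; ring
  · intro h ha hb; rw [load, hS'other h ha hb, load]
  · rw [hμ]; linarith
end

section
/- Let D be an n×n nonnegative real demand matrix all of whose nonzero entries lie in a single row i, which contains exactly s nonzero entries, and let δ > 0. For any schedule of D over s parallel switches with reconfiguration delay δ that covers D, there exists a schedule of D over the same s switches that covers D, has makespan at most that of the original schedule, and in which every switch has at most s configurations (hence at most s² configurations in total). -/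
open Finset

/- auxiliary lemmas -/

lemma aux_partition_sum {n : ℕ} (i₀ : Fin n) (f : Config n → ℝ) (L : List (Config n)) :
    ∑ j : Fin n, ((L.filter (fun c => decide (c.1 i₀ = j))).map f).sum = (L.map f).sum := by
  induction L with
  | nil => simp
  | cons c L ih =>
    have key : ∀ j : Fin n,
        (((c :: L).filter (fun c => decide (c.1 i₀ = j))).map f).sum
          = (if c.1 i₀ = j then f c else 0)
            + ((L.filter (fun c => decide (c.1 i₀ = j))).map f).sum := by
      intro j
      by_cases hc : c.1 i₀ = j <;> simp [List.filter_cons, hc]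
    simp only [key]
    rw [Finset.sum_add_distrib, ih, Finset.sum_ite_eq]
    simp

lemma aux_sum_map_filter {α : Type*} (q : α → Bool) (F : α → ℝ) (l : List α) :
    ((l.filter q).map F).sum = (l.map (fun j => if q j then F j else 0)).sum := by
  induction l with
  | nil => simp
  | cons a l ih =>
    by_cases ha : q a <;> simp [List.filter_cons, ha, ih]

lemma aux_cons_bound {n : ℕ} (δ : ℝ) (hδ : 0 < δ) (l : List (Config n)) (hne : l ≠ []) :
    δ + (l.map Prod.snd).sum ≤ (l.map (fun c => δ + c.2)).sum := by
  cases l with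
  | nil => exact absurd rfl hne
  | cons c t =>
    simp only [List.map_cons, List.sum_cons]
    have : (t.map Prod.snd).sum ≤ (t.map (fun c => δ + c.2)).sum :=
      List.sum_le_sum (fun i _ => by linarith)
    linarith


/-- If all nonzero entries of `D` lie in a single row `i₀`, which contains
exactly `s` nonzero entries, then any covering schedule over `s` parallel
switches can be replaced by a covering schedule of makespan at most that of
the original in which every switch has at most `s` configurations (hence at
most `s²` configurations in total). -/
theorem exists_schedule_with_few_configs {n s : ℕ} (hs : 1 ≤ s)
    (D : Matrix (Fin n) (Fin n) ℝ) (hD : ∀ i j, 0 ≤ D i j)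
    (i₀ : Fin n)
    (hrow : ∀ i j, i ≠ i₀ → D i j = 0)
    (hcard : (univ.filter fun j => D i₀ j ≠ 0).card = s)
    (δ : ℝ) (hδ : 0 < δ)
    (S : Schedule n s) (hval : ValidWeights S) (hcov : Covers D S) :
    ∃ S' : Schedule n s, ValidWeights S' ∧ Covers D S' ∧
      makespan δ S' ≤ makespan δ S ∧
      (∀ h : Fin s, (S' h).length ≤ s) ∧
      ∑ h : Fin s, (S' h).length ≤ s * s := by
  classical
  set w : Fin s → Fin n → ℝ :=
    fun h j => (((S h).filter (fun c => decide (c.1 i₀ = j))).map Prod.snd).sum with hw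
  have hwnn : ∀ h j, 0 ≤ w h j := by
    intro h j
    apply List.sum_nonneg
    intro x hx
    simp only [List.mem_map, List.mem_filter] at hx
    obtain ⟨c, ⟨hc, -⟩, rfl⟩ := hx
    exact le_of_lt (hval h c hc)
  set q : Fin s → Fin n → Bool :=
    fun h j => decide (D i₀ j ≠ 0) && decide (0 < w h j) with hq
  set S' : Schedule n s :=
    fun h => ((List.finRange n).filter (q h)).map (fun j => (Equiv.swap i₀ j, w h j)) with hS'
  have hval' : ValidWeights S' := by
    intro h c hc
    simp only [hS', List.mem_map, List.mem_filter] at hc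
    obtain ⟨j, ⟨-, hj⟩, rfl⟩ := hc
    simp only [hq, Bool.and_eq_true, decide_eq_true_eq] at hj
    exact hj.2
  -- served weight of S' at (i₀, j)
  have hserved : ∀ j : Fin n, D i₀ j ≠ 0 → servedWeight S' i₀ j = servedWeight S i₀ j := by
    intro j hj
    unfold servedWeight
    apply Finset.sum_congr rfl
    intro h _
    have h1 : (S' h).filter (fun c => decide (c.1 i₀ = j))
        = (((List.finRange n).filter (q h)).filter
            (fun j' => decide ((Equiv.swap i₀ j' : Equiv.Perm (Fin n)) i₀ = j))).map
            (fun j' => (Equiv.swap i₀ j', w h j')) := by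
      rw [hS', List.filter_map]
      rfl
    rw [h1, List.filter_filter, List.map_map]
    have h2 : ((((List.finRange n).filter
          (fun j' => (decide ((Equiv.swap i₀ j' : Equiv.Perm (Fin n)) i₀ = j)) && q h j'))).map
          ((Prod.snd ∘ fun j' => ((Equiv.swap i₀ j' : Equiv.Perm (Fin n)), w h j')))).sum
        = ∑ j' : Fin n, if ((decide ((Equiv.swap i₀ j' : Equiv.Perm (Fin n)) i₀ = j)) && q h j')
            then w h j' else 0 := by
      rw [aux_sum_map_filter, ← Fin.sum_univ_def]
      rfl
    rw [h2]
    rw [Finset.sum_eq_single j]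
    · show _ = w h j
      simp only [Equiv.swap_apply_left, decide_eq_true_eq, hq]
      by_cases hp : 0 < w h j
      · simp [hj, hp]
      · have h0 : w h j = 0 := le_antisymm (not_lt.1 hp) (hwnn h j)
        simp [h0]
    · intro b _ hb
      simp [Equiv.swap_apply_left, hb]
    · simp
  refine ⟨S', hval', ?_, ?_, ?_, ?_⟩
  · -- Covers
    intro i j
    by_cases hij : D i j = 0
    · rw [hij]
      apply Finset.sum_nonneg
      intro h _
      apply List.sum_nonneg
      intro x hx
      simp only [List.mem_map, List.mem_filter] at hx
      obtain ⟨c, ⟨hc, -⟩, rfl⟩ := hx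
      exact le_of_lt (hval' h c hc)
    · have hi : i = i₀ := by
        by_contra hne
        exact hij (hrow i j hne)
      rw [hi]
      rw [hserved j (by rwa [hi] at hij)]
      exact hcov i₀ j
  · -- makespan
    have : Nonempty (Fin s) := ⟨⟨0, hs⟩⟩
    refine ciSup_le fun h => le_trans ?_ (le_ciSup (Finite.bddAbove_range _) h)
    -- load δ S' h ≤ load δ S h
    have hl' : load δ S' h = ∑ j : Fin n, if q h j then δ + w h j else 0 := by
      rw [load, hS', List.map_map, aux_sum_map_filter, ← Fin.sum_univ_def]
      rfl
    have hl : load δ S h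
        = ∑ j : Fin n, (((S h).filter (fun c => decide (c.1 i₀ = j))).map (fun c => δ + c.2)).sum := by
      rw [load, aux_partition_sum]
    rw [hl', hl]
    apply Finset.sum_le_sum
    intro j _
    by_cases hqj : q h j
    · simp only [hqj, if_true]
      have hpos : 0 < w h j := by
        simp only [hq, Bool.and_eq_true, decide_eq_true_eq] at hqj
        exact hqj.2
      have hne : (S h).filter (fun c => decide (c.1 i₀ = j)) ≠ [] := by
        intro hnil
        rw [hw] at hpos
        simp only at hpos
        rw [hnil] at hpos
        simp at hpos
      exact aux_cons_bound δ hδ _ hne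
    · simp only [hqj, if_false]
      apply List.sum_nonneg
      intro x hx
      simp only [List.mem_map, List.mem_filter] at hx
      obtain ⟨c, ⟨hc, -⟩, rfl⟩ := hx
      have := hval h c hc
      linarith
  · -- lengths
    intro h
    rw [hS']
    simp only [List.length_map, ← List.countP_eq_length_filter]
    calc List.countP (q h) (List.finRange n)
        ≤ List.countP (fun j => decide (D i₀ j ≠ 0)) (List.finRange n) := by
          apply List.countP_mono_left
          intro x _ hx
          simp only [hq, Bool.and_eq_true] at hx
          exact hx.1
      _ = s := by
          rw [List.countP_eq_length_filter, ← List.toFinset_card_of_nodup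
            ((List.nodup_finRange n).filter _), List.toFinset_filter, List.toFinset_finRange]
          simpa using hcard
  · -- total
    calc ∑ h : Fin s, (S' h).length ≤ ∑ _h : Fin s, s := by
          apply Finset.sum_le_sum
          intro h _
          rw [hS']
          simp only [List.length_map, ← List.countP_eq_length_filter]
          calc List.countP (q h) (List.finRange n)
              ≤ List.countP (fun j => decide (D i₀ j ≠ 0)) (List.finRange n) := by
                apply List.countP_mono_left
                intro x _ hx
                simp only [hq, Bool.and_eq_true] at hx
                exact hx.1
            _ = s := by
                rw [List.countP_eq_length_filter, ← List.toFinset_card_of_nodup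
                  ((List.nodup_finRange n).filter _), List.toFinset_filter, List.toFinset_finRange]
                simpa using hcard
      _ = s * s := by simp [Finset.sum_const, mul_comm]
end
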